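/- (Lemma 2.1, second part) Let 0 < p < ∞, suppose μ(B) > 0 and ν(∂B) > 0, assume ω(z) = ω_{μ,q,s,ν}(z) ∈ (0,∞) for every z ∈ B, let t > 0 satisfy t + q > n + 1 and n + 1 > 2 + q, and assume additionally t + n − 1 > q + ns. Then f_{w,t} → 0 locally uniformly as |w| → 1⁻: for every compact set L ⊆ B and every ε > 0 there exists δ ∈ (0,1) such that sup_{z ∈ L} |f_{w,t}(z)| < ε whenever w ∈ B and |w| > 1 − δ. -/

import Mathlib

open MeasureTheory Complex Metric
open scoped ENNReal NNReal Classical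

noncomputable section

abbrev EE (n : ℕ) := EuclideanSpace ℂ (Fin n)

instance {n : ℕ} : MeasurableSpace (EE n) := borel _
instance {n : ℕ} : BorelSpace (EE n) := ⟨rfl⟩
instance {n : ℕ} : MeasureSpace (EE n) := ⟨Measure.addHaar⟩

/-- The Hermitian pairing `⟨z,w⟩ = ∑ z_j conj(w_j)`. -/
def hprod {n : ℕ} (z w : EE n) : ℂ := ∑ j, z j * (starRingEnd ℂ) (w j)

/-- The Möbius involution `φ_w(z)`, with `φ_0(z) = -z`. -/
def mobius {n : ℕ} (w z : EE n) : EE n :=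
  if w = 0 then -z
  else
    (1 - hprod z w)⁻¹ •
      ((w - (hprod z w / ((‖w‖ ^ 2 : ℝ) : ℂ)) • w)
        - ((Real.sqrt (1 - ‖w‖ ^ 2) : ℝ) : ℂ) • (z - (hprod z w / ((‖w‖ ^ 2 : ℝ) : ℂ)) • w))

/-- The Bergman metric `β(z,w)`. -/
def bergmanDist {n : ℕ} (z w : EE n) : ℝ :=
  (1 / 2) * Real.log ((1 + ‖mobius z w‖) / (1 - ‖mobius z w‖))

/-- The Bergman metric ball `D(a,r) = {w ∈ B : β(a,w) < r}`. -/
def bergmanBall {n : ℕ} (a : EE n) (r : ℝ) : Set (EE n) :=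
  {w : EE n | ‖w‖ < 1 ∧ bergmanDist a w < r}

/-- `g` as a function of `x = |z|`:  `((n+1)/(2n)) ∫_x^1 r^{1-2n} (1-r²)^{n-1} dr`. -/
def greenLittle (n : ℕ) (x : ℝ) : ℝ :=
  ((n + 1 : ℝ) / (2 * n)) * ∫ r in Set.Ioo x 1, r ^ ((1 : ℝ) - 2 * n) * (1 - r ^ 2) ^ (n - 1)

/-- The invariant Green's function `G(z,w) = g(φ_z(w))`. -/
def greenFn {n : ℕ} (z w : EE n) : ℝ := greenLittle n ‖mobius z w‖

/-- `U_{μ,s}(z) = ∫_B G(z,w)^s dμ(w)`, valued in `[0,∞]`. -/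
def Umu {n : ℕ} (μ : Measure (EE n)) (s : ℝ) (z : EE n) : ℝ≥0∞ :=
  ∫⁻ w in ball (0 : EE n) 1, ENNReal.ofReal (greenFn z w ^ s) ∂μ

/-- The invariant Poisson kernel `P(z,ξ)`. -/
def poissonKer (n : ℕ) (z ξ : EE n) : ℝ :=
  (1 - ‖z‖ ^ 2) ^ n / ‖1 - hprod z ξ‖ ^ (2 * n)

/-- The Poisson integral `Pν(z)` of a measure `ν` on `∂B`, valued in `[0,∞]`. -/
def Pnu {n : ℕ} (ν : Measure (EE n)) (z : EE n) : ℝ≥0∞ :=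
  ∫⁻ ξ in sphere (0 : EE n) 1, ENNReal.ofReal (poissonKer n z ξ) ∂ν

/-- The weight `ω_{μ,q,s,ν}(z) = (1-|z|²)^q U_{μ,s}(z) + Pν(z)`, valued in `[0,∞]`. -/
def omegaW {n : ℕ} (q s : ℝ) (μ ν : Measure (EE n)) (z : EE n) : ℝ≥0∞ :=
  ENNReal.ofReal ((1 - ‖z‖ ^ 2) ^ q) * Umu μ s z + Pnu ν z

/-- `‖f‖_{A^p_ω} = (∫_B |f|^p ω dv)^{1/p}`, valued in `[0,∞]`. -/
def apNorm {n : ℕ} (p : ℝ) (ω : EE n → ℝ≥0∞) (f : EE n → ℂ) : ℝ≥0∞ :=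
  (∫⁻ z in ball (0 : EE n) 1, ENNReal.ofReal (‖f z‖ ^ p) * ω z) ^ (1 / p)

/-- Membership in the weighted Bergman space `A^p_ω(B)`. -/
def MemAp {n : ℕ} (p : ℝ) (ω : EE n → ℝ≥0∞) (f : EE n → ℂ) : Prop :=
  DifferentiableOn ℂ f (ball (0 : EE n) 1) ∧ apNorm p ω f < ⊤

/-- `η` is a `p̃`-Carleson measure for `A^p_ω(B)`. -/
def IsCarleson {n : ℕ} (pt p : ℝ) (ω : EE n → ℝ≥0∞) (η : Measure (EE n)) : Prop :=
  ∃ C : ℝ, 0 < C ∧ ∀ f : EE n → ℂ, MemAp p ω f →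
    (∫⁻ z in ball (0 : EE n) 1, ENNReal.ofReal (‖f z‖ ^ pt) ∂η) ^ (1 / pt)
      ≤ ENNReal.ofReal C * apNorm p ω f

/-- The test function `f_{w,t}` (principal branch powers). -/
def testFun {n : ℕ} (q s p t : ℝ) (μ ν : Measure (EE n)) (w z : EE n) : ℂ :=
  ((((1 - ‖w‖ ^ 2) ^ (t + n - 1) / (omegaW q s μ ν w).toReal) ^ (1 / p) : ℝ) : ℂ) *
    (1 - hprod z w) ^ (((-((2 * n + t) / p) : ℝ)) : ℂ)


lemma hprod_abs_le {n : ℕ} (z w : EE n) : ‖hprod z w‖ ≤ ‖z‖ * ‖w‖ := by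
  have h : hprod z w = (inner ℂ w z : ℂ) := by
    simp [hprod, PiLp.inner_apply, RCLike.inner_apply, mul_comm]
  rw [h]
  calc ‖(inner ℂ w z : ℂ)‖ ≤ ‖w‖ * ‖z‖ := norm_inner_le_norm w z
    _ = ‖z‖ * ‖w‖ := mul_comm _ _

lemma one_sub_hprod_lb {n : ℕ} {z w : EE n} {r : ℝ} (hz : ‖z‖ ≤ r) (hw : ‖w‖ ≤ 1) :
    1 - r ≤ ‖1 - hprod z w‖ := by
  have h1 : ‖hprod z w‖ ≤ r := by
    calc ‖hprod z w‖ ≤ ‖z‖ * ‖w‖ := hprod_abs_le z w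
      _ ≤ r * 1 := by
          apply mul_le_mul hz hw (norm_nonneg _) ((norm_nonneg z).trans hz)
      _ = r := mul_one r
  calc 1 - r ≤ 1 - ‖hprod z w‖ := by linarith
    _ = ‖(1 : ℂ)‖ - ‖hprod z w‖ := by simp
    _ ≤ ‖(1 : ℂ) - hprod z w‖ := norm_sub_norm_le _ _
    _ = ‖1 - hprod z w‖ := rfl

/-- Lower bound for the Poisson integral. -/
lemma pnu_lb {n : ℕ} (ν : Measure (EE n)) {w : EE n} (hw : ‖w‖ < 1) :
    ENNReal.ofReal ((1 - ‖w‖ ^ 2) ^ n / 4 ^ n) * ν (sphere (0 : EE n) 1) ≤ Pnu ν w := by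
  rw [Pnu, ← MeasureTheory.setLIntegral_const]
  apply MeasureTheory.setLIntegral_mono' (Metric.isClosed_sphere.measurableSet)
  · intro ξ hξ
    apply ENNReal.ofReal_le_ofReal
    have hξ1 : ‖ξ‖ = 1 := by simpa using hξ
    have hb : ‖1 - hprod w ξ‖ ≤ 2 := by
      calc ‖1 - hprod w ξ‖ ≤ ‖(1:ℂ)‖ + ‖hprod w ξ‖ := by
            simpa using norm_sub_le (1:ℂ) (hprod w ξ)
        _ ≤ 1 + 1 := by
            have := (hprod_abs_le w ξ)
            rw [hξ1, mul_one] at this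
            simp [this.trans hw.le]
        _ = 2 := by norm_num
    have hbpos : 0 < ‖1 - hprod w ξ‖ := by
      have := one_sub_hprod_lb (r := ‖w‖) le_rfl hξ1.le (z := w) (w := ξ)
      linarith
    rw [poissonKer]
    have hle : ‖1 - hprod w ξ‖ ^ (2 * n) ≤ 4 ^ n := by
      calc ‖1 - hprod w ξ‖ ^ (2 * n) ≤ 2 ^ (2 * n) :=
            pow_le_pow_left₀ hbpos.le hb _
        _ = 4 ^ n := by rw [pow_mul]; norm_num
    have hnum : (0:ℝ) ≤ (1 - ‖w‖ ^ 2) ^ n := by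
      have h0 : (0:ℝ) ≤ 1 - ‖w‖ ^ 2 := by nlinarith [norm_nonneg w]
      positivity
    exact div_le_div_of_nonneg_left hnum (pow_pos hbpos _) hle

set_option maxHeartbeats 1000000 in
/-- Lemma 2.1, second part: the test functions tend to zero
locally uniformly as `|w| → 1⁻`. -/
theorem stmt_5 (n : ℕ) (hn : 2 ≤ n) (q s p t : ℝ) (hq : -2 < q) (hs : 0 ≤ s) (hqs : -1 < q + s)
    (hp : 0 < p) (ht : 0 < t) (htq : (n : ℝ) + 1 < t + q) (hqn : 2 + q < (n : ℝ) + 1)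
    (hts : q + n * s < t + n - 1)
    (μ ν : Measure (EE n)) [IsFiniteMeasure μ] [IsFiniteMeasure ν]
    (hμ : 0 < μ (ball (0 : EE n) 1)) (hν : 0 < ν (sphere (0 : EE n) 1))
    (hω : ∀ z ∈ ball (0 : EE n) 1, omegaW q s μ ν z ≠ 0 ∧ omegaW q s μ ν z ≠ ⊤) :
    ∀ L : Set (EE n), IsCompact L → L ⊆ ball (0 : EE n) 1 →
      ∀ ε : ℝ, 0 < ε → ∃ δ : ℝ, 0 < δ ∧ δ < 1 ∧
        ∀ w : EE n, ‖w‖ < 1 → 1 - δ < ‖w‖ →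
          ∀ z ∈ L, ‖testFun q s p t μ ν w z‖ < ε := by
  intro L hL hLsub ε hε
  -- trivial case: L empty
  rcases L.eq_empty_or_nonempty with rfl | hne
  · exact ⟨1/2, by norm_num, by norm_num, fun w _ _ z hz => by simp at hz⟩
  -- get a uniform radius r < 1 for L
  obtain ⟨z₀, hz₀L, hz₀⟩ := hL.exists_isMaxOn hne (continuous_norm.continuousOn)
  set r : ℝ := ‖z₀‖ with hr
  have hr0 : 0 ≤ r := norm_nonneg _
  have hr1 : r < 1 := by simpa [hr] using mem_ball_zero_iff.mp (hLsub hz₀L)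
  -- constants
  have hνR : 0 < (ν (sphere (0 : EE n) 1)).toReal :=
    ENNReal.toReal_pos hν.ne' (measure_ne_top ν _)
  set K : ℝ := 4 ^ n / (ν (sphere (0 : EE n) 1)).toReal with hK
  have hKpos : 0 < K := by positivity
  set c : ℝ := (2 * n + t) / p with hc
  have hcpos : 0 < c := by
    have : (0:ℝ) < 2 * n + t := by positivity
    exact div_pos this hp
  set M : ℝ := (1 - r) ^ (-c) with hM
  have hMpos : 0 < M := Real.rpow_pos_of_pos (by linarith) _
  set A : ℝ := K ^ (1 / p) * M with hA
  have hApos : 0 < A := mul_pos (Real.rpow_pos_of_pos hKpos _) hMpos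
  have ht2 : 2 < t := by
    have : q < (n:ℝ) - 1 := by linarith
    linarith
  have htp : 0 < (t - 1) / p := div_pos (by linarith) hp
  set δ₀ : ℝ := (ε / A) ^ (p / (t - 1)) with hδ₀
  have hδ₀pos : 0 < δ₀ := Real.rpow_pos_of_pos (div_pos hε hApos) _
  refine ⟨min (1/2) (δ₀ / 4), lt_min (by norm_num) (by positivity), by
    calc min (1/2) (δ₀/4) ≤ 1/2 := min_le_left _ _
      _ < 1 := by norm_num, ?_⟩
  set δ : ℝ := min (1/2) (δ₀ / 4) with hδ
  intro w hw hwδ z hzL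
  have hwB : w ∈ ball (0 : EE n) 1 := mem_ball_zero_iff.mpr hw
  have hx0 : 0 < 1 - ‖w‖ ^ 2 := by nlinarith [norm_nonneg w]
  set x : ℝ := 1 - ‖w‖ ^ 2 with hxdef
  -- x < 2δ
  have hx2δ : x < 2 * δ := by
    have h1 : 1 - ‖w‖ < δ := by linarith
    have h2 : 1 + ‖w‖ ≤ 2 := by linarith
    have : x = (1 - ‖w‖) * (1 + ‖w‖) := by ring
    rw [this]
    calc (1 - ‖w‖) * (1 + ‖w‖) ≤ (1 - ‖w‖) * 2 := by nlinarith [norm_nonneg w]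
      _ < δ * 2 := by nlinarith
      _ = 2 * δ := mul_comm _ _
  -- ω lower bound
  obtain ⟨hω0, hωT⟩ := hω w hwB
  have hωR : 0 < (omegaW q s μ ν w).toReal := ENNReal.toReal_pos hω0 hωT
  have hPle : Pnu ν w ≤ omegaW q s μ ν w := le_add_self
  have hωlb : x ^ n / 4 ^ n * (ν (sphere (0 : EE n) 1)).toReal
      ≤ (omegaW q s μ ν w).toReal := by
    have h1 := (pnu_lb ν hw).trans hPle
    have h2 := ENNReal.toReal_mono hωT h1
    rwa [ENNReal.toReal_mul, ENNReal.toReal_ofReal (by positivity)] at h2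
  have hωlb' : 0 < x ^ n / 4 ^ n * (ν (sphere (0 : EE n) 1)).toReal := by positivity
  -- bound the scalar factor
  have hscalar : x ^ (t + n - 1) / (omegaW q s μ ν w).toReal ≤ x ^ (t - 1) * K := by
    have h1 : x ^ (t + n - 1) / (omegaW q s μ ν w).toReal
        ≤ x ^ (t + n - 1) / (x ^ n / 4 ^ n * (ν (sphere (0 : EE n) 1)).toReal) := by
      apply div_le_div_of_nonneg_left _ hωlb' hωlb
      positivity
    refine h1.trans (le_of_eq ?_)
    have hxn : (x : ℝ) ^ n = x ^ ((n : ℝ)) := (Real.rpow_natCast x n).symm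
    have hkey : x ^ (t + n - 1) = x ^ (t - 1) * x ^ ((n : ℝ)) := by
      rw [← Real.rpow_add hx0]; congr 1; ring
    have hxnne : x ^ ((n : ℝ)) ≠ 0 := (Real.rpow_pos_of_pos hx0 _).ne'
    rw [hK, hxn, hkey]
    field_simp
  -- bound the cpow factor
  have hzr : ‖z‖ ≤ r := hz₀ hzL
  have hulb : 1 - r ≤ ‖1 - hprod z w‖ := one_sub_hprod_lb hzr hw.le
  have hune : (1 : ℂ) - hprod z w ≠ 0 := by
    intro h
    rw [h, norm_zero] at hulb
    linarith
  have habs : ‖(1 - hprod z w) ^ (((-c : ℝ)) : ℂ)‖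
      = ‖1 - hprod z w‖ ^ (-c) := by
    rw [Complex.norm_cpow_of_ne_zero hune]
    simp
  have hcle : ‖1 - hprod z w‖ ^ (-c) ≤ M := by
    rw [hM]
    exact Real.rpow_le_rpow_of_nonpos (by linarith) hulb (by linarith)
  -- put things together
  have habsf : ‖testFun q s p t μ ν w z‖
      = (x ^ (t + n - 1) / (omegaW q s μ ν w).toReal) ^ (1 / p)
        * ‖(1 - hprod z w) ^ (((-c : ℝ)) : ℂ)‖ := by
    rw [testFun, norm_mul, Complex.norm_real, Real.norm_of_nonneg (by positivity)]
  rw [habsf, habs]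
  have hS : (x ^ (t + n - 1) / (omegaW q s μ ν w).toReal) ^ (1 / p)
      ≤ (x ^ (t - 1) * K) ^ (1 / p) :=
    Real.rpow_le_rpow (by positivity) hscalar (by positivity)
  have hsplit : (x ^ (t - 1) * K) ^ (1 / p) = x ^ ((t - 1) / p) * K ^ (1 / p) := by
    rw [Real.mul_rpow (by positivity) hKpos.le, ← Real.rpow_mul hx0.le, mul_one_div]
  calc (x ^ (t + n - 1) / (omegaW q s μ ν w).toReal) ^ (1 / p)
        * ‖1 - hprod z w‖ ^ (-c)
      ≤ (x ^ (t - 1) * K) ^ (1 / p) * M := by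
        apply mul_le_mul hS hcle (Real.rpow_nonneg (norm_nonneg _) _) (by positivity)
    _ = x ^ ((t - 1) / p) * A := by rw [hsplit, hA]; ring
    _ < (2 * δ) ^ ((t - 1) / p) * A := by
        apply mul_lt_mul_of_pos_right _ hApos
        exact Real.rpow_lt_rpow hx0.le hx2δ htp
    _ ≤ δ₀ ^ ((t - 1) / p) * A := by
        apply mul_le_mul_of_nonneg_right _ hApos.le
        apply Real.rpow_le_rpow (by positivity) _ htp.le
        calc 2 * δ ≤ 2 * (δ₀ / 4) := by
              have := min_le_right (1/2 : ℝ) (δ₀/4); nlinarith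
          _ ≤ δ₀ := by linarith
    _ = ε / A * A := by
        rw [hδ₀, ← Real.rpow_mul (div_nonneg hε.le hApos.le)]
        have htne : t - 1 ≠ 0 := ne_of_gt (by linarith)
        have hkey : p / (t - 1) * ((t - 1) / p) = 1 := by
          field_simp
        rw [hkey, Real.rpow_one]
    _ = ε := div_mul_cancel₀ ε hApos.ne'


end
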